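/- For every integer n ≥ 2 there exist uncountably many formal power series f(z) ∈ ℂ[[z]] of compositional order n whose radius of convergence is zero, i.e., f(z) does not converge for any nonzero z ∈ ℂ. -/

import Mathlib

open PowerSeries

/-- Composition (substitution) of formal power series: coefficient formula,
valid for `g` with zero constant term. -/
noncomputable def PS.comp {F : Type*} [CommRing F] (f g : PowerSeries F) : PowerSeries F :=
  PowerSeries.mk fun k =>
    ∑ n ∈ Finset.range (k + 1), (PowerSeries.coeff n f) * (PowerSeries.coeff k (g ^ n))

/-- The group `G` of series with zero constant term and nonzero linear coefficient. -/
def PS.G (F : Type*) [CommRing F] : Set (PowerSeries F) :=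
  {f | PowerSeries.constantCoeff f = 0 ∧ PowerSeries.coeff 1 f ≠ 0}

/-- `n`-fold compositional iterate of `f`. -/
noncomputable def PS.iter {F : Type*} [CommRing F] (f : PowerSeries F) : ℕ → PowerSeries F
  | 0 => PowerSeries.X
  | n + 1 => PS.comp f (PS.iter f n)

/-- `f` has compositional order exactly `n`. -/
def PS.HasOrder {F : Type*} [CommRing F] (f : PowerSeries F) (n : ℕ) : Prop :=
  PS.iter f n = PowerSeries.X ∧ ∀ m, 0 < m → m < n → PS.iter f m ≠ PowerSeries.X

/-!
Let `ζ` be a primitive `n`-th root of unity. Whatever the coefficients `f_k` with `ζ ^ k ≠ ζ`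
are, the equation `g ∘ f = ζ • g` can be solved coefficient by coefficient for a series `g`
tangent to the identity, the remaining (resonant) coefficients of `f` being forced. Then `f` is
formally conjugate to the rotation `z ↦ ζ z`, so it has order exactly `n`. Prescribing
`f_{nm} = (nm) ^ (nm)` makes the terms of `∑ f_k z ^ k` unbounded for every `z ≠ 0`, and leaving
`f_n` free gives uncountably many such series.
-/

open Finset

theorem pow_sub_pow_dvd_of_pow_dvd_sub {R : Type*} [CommRing R] {x a b : R} {k m : ℕ}
    (hab : x ^ k ∣ a - b) (ha : x ∣ a) (hb : x ∣ b) (hm : 2 ≤ m) :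
    x ^ (k + 1) ∣ a ^ m - b ^ m := by
  rw [← geom_sum₂_mul, pow_succ, mul_comm]
  refine mul_dvd_mul (dvd_sum fun i _ => ?_) hab
  rcases Nat.eq_zero_or_pos i with rfl | hi
  · exact dvd_mul_of_dvd_right (dvd_pow hb (by omega)) _
  · exact dvd_mul_of_dvd_left (dvd_pow ha hi.ne') _

namespace PS

section CommRing

variable {R : Type*} [CommRing R] {f g : R⟦X⟧}

@[simp]
theorem coeff_comp (f g : R⟦X⟧) (k : ℕ) :
    coeff k (PS.comp f g) = ∑ m ∈ range (k + 1), coeff m f * coeff k (g ^ m) := by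
  simp [PS.comp]

theorem constantCoeff_comp (f g : R⟦X⟧) : constantCoeff (PS.comp f g) = constantCoeff f := by
  rw [← coeff_zero_eq_constantCoeff_apply, ← coeff_zero_eq_constantCoeff_apply, coeff_comp]
  simp

theorem coeff_pow_of_lt (hg : constantCoeff g = 0) {k m : ℕ} (hkm : k < m) :
    coeff k (g ^ m) = 0 := by
  obtain ⟨h, rfl⟩ := X_dvd_iff.mpr hg
  rw [mul_pow, coeff_X_pow_mul', if_neg (by omega)]

theorem coeff_pow_self (hg : constantCoeff g = 0) (k : ℕ) :
    coeff k (g ^ k) = coeff 1 g ^ k := by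
  obtain ⟨h, rfl⟩ := X_dvd_iff.mpr hg
  rw [mul_pow, coeff_X_pow_mul', if_pos le_rfl, Nat.sub_self, coeff_zero_eq_constantCoeff,
    map_pow, ← pow_one X, coeff_X_pow_mul', if_pos le_rfl, Nat.sub_self,
    coeff_zero_eq_constantCoeff]

theorem comp_eq_subst (hg : constantCoeff g = 0) : PS.comp f g = subst g f := by
  ext k
  rw [coeff_comp, coeff_subst' (HasSubst.of_constantCoeff_zero' hg),
    finsum_eq_sum_of_support_subset (s := range (k + 1))]
  · simp only [smul_eq_mul]
  · intro d hd
    by_contra hdk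
    simp only [coe_range, Set.mem_Iio, not_lt] at hdk
    simp [coeff_pow_of_lt hg (show k < d by omega)] at hd

theorem coeff_trunc_pow (hf : constantCoeff f = 0) {K m : ℕ} (hm : 2 ≤ m) :
    coeff K ((trunc K f : R⟦X⟧) ^ m) = coeff K (f ^ m) := by
  have hdiff : X ^ K ∣ f - (trunc K f : R⟦X⟧) := X_pow_dvd_iff.mpr fun i hi => by
    simp [Polynomial.coeff_coe, coeff_trunc, hi]
  have htrunc : X ∣ (trunc K f : R⟦X⟧) := X_dvd_iff.mpr <| by
    rw [← coeff_zero_eq_constantCoeff_apply, Polynomial.coeff_coe, coeff_trunc]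
    split_ifs <;> simp [hf]
  have := X_pow_dvd_iff.mp (pow_sub_pow_dvd_of_pow_dvd_sub hdiff (X_dvd_iff.mpr hf) htrunc hm)
    K K.lt_succ_self
  rwa [map_sub, sub_eq_zero, eq_comm] at this

theorem coeff_comp_eq_add_coeff_comp_trunc (hf : constantCoeff f = 0)
    (hg : constantCoeff g = 0) {K : ℕ} (hK : 2 ≤ K) :
    coeff K (PS.comp g f) = coeff 1 g * coeff K f + coeff K g * coeff 1 f ^ K
      + coeff K (PS.comp (trunc K g) (trunc K f)) := by
  have hg0 : coeff 0 g = 0 := by rw [coeff_zero_eq_constantCoeff_apply, hg]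
  have term : ∀ m ∈ range (K + 1), coeff m g * coeff K (f ^ m) =
      ((if m = 1 then coeff 1 g * coeff K f else 0)
        + if m = K then coeff K g * coeff 1 f ^ K else 0)
      + coeff m (trunc K g : R⟦X⟧) * coeff K ((trunc K f : R⟦X⟧) ^ m) := by
    intro m hm
    have hmK := Nat.lt_succ_iff.mp (mem_range.mp hm)
    simp only [Polynomial.coeff_coe, coeff_trunc]
    rcases Nat.lt_or_ge m 2 with hm2 | hm2
    · interval_cases m
      · simp [hg0, show 0 ≠ K by omega]
      · simp [Polynomial.coeff_coe, coeff_trunc, show 1 ≠ K by omega]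
    · rcases hmK.lt_or_eq with hmK | rfl
      · simp [show m ≠ 1 by omega, hmK.ne, hmK, coeff_trunc_pow hf hm2]
      · simp [show m ≠ 1 by omega, coeff_pow_self hf]
  rw [coeff_comp, coeff_comp, sum_congr rfl term, sum_add_distrib, sum_add_distrib,
    sum_ite_eq', sum_ite_eq', if_pos (mem_range.mpr (by omega)),
    if_pos (mem_range.mpr (by omega))]

theorem constantCoeff_iter (hf : constantCoeff f = 0) (m : ℕ) :
    constantCoeff (PS.iter f m) = 0 := by
  induction m with
  | zero => exact constantCoeff_X
  | succ m _ => rw [PS.iter, constantCoeff_comp, hf]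

theorem subst_iter_of_comp_eq_smul {ζ : R} (hf : constantCoeff f = 0)
    (hfg : PS.comp g f = ζ • g) (m : ℕ) : subst (PS.iter f m) g = ζ ^ m • g := by
  induction m with
  | zero => simp [PS.iter]
  | succ m ih =>
    have hm := HasSubst.of_constantCoeff_zero' (constantCoeff_iter hf m)
    rw [PS.iter, comp_eq_subst (constantCoeff_iter hf m),
      ← subst_comp_subst_apply (HasSubst.of_constantCoeff_zero' hf) hm, ← comp_eq_subst hf, hfg,
      subst_smul hm, ih, smul_smul, pow_succ']

theorem eq_X_of_subst_eq_self {p : R⟦X⟧} (hg : constantCoeff g = 0) (hg1 : IsUnit (coeff 1 g))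
    (hp : constantCoeff p = 0) (hgp : subst p g = g) : p = X := by
  have hp' := HasSubst.of_constantCoeff_zero' hp
  calc p = subst p X := (subst_X hp').symm
    _ = subst p (subst g (g.substInvOfIsUnit hg1)) := by rw [subst_substInvOfIsUnit_left g hg]
    _ = subst g (g.substInvOfIsUnit hg1) := by
      rw [subst_comp_subst_apply (HasSubst.of_constantCoeff_zero' hg) hp', hgp]
    _ = X := subst_substInvOfIsUnit_left g hg hg1

theorem hasOrder_of_comp_eq_smul {ζ : R} {n : ℕ} (hζ : IsPrimitiveRoot ζ n)
    (hf : constantCoeff f = 0) (hg : constantCoeff g = 0) (hg1 : IsUnit (coeff 1 g))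
    (hfg : PS.comp g f = ζ • g) : PS.HasOrder f n := by
  refine ⟨eq_X_of_subst_eq_self hg hg1 (constantCoeff_iter hf n) ?_, fun m hm0 hmn hm => ?_⟩
  · rw [subst_iter_of_comp_eq_smul hf hfg, hζ.pow_eq_one, one_smul]
  · have h := congrArg (coeff 1) (subst_iter_of_comp_eq_smul hf hfg m)
    rw [hm, X_subst, coeff_smul, smul_eq_mul] at h
    exact hζ.pow_ne_one_of_pos_of_lt hm0.ne' hmn
      (hg1.mul_right_cancel (h.symm.trans (one_mul _).symm))

end CommRing

section Linearization

variable {F : Type*} [Field F] (ζ : F) (t : ℕ → F)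

/- `linCoeff ζ t K = (f_K, g_K)`. The `K`-th coefficient of `g ∘ f = ζ • g` reads
`f_K + M = (ζ - ζ ^ K) g_K`, with `M` involving only lower coefficients
(`coeff_comp_eq_add_coeff_comp_trunc`); so `f_K := t K` can be prescribed unless `ζ ^ K = ζ`,
in which case `f_K = -M` is forced. -/
open Classical in
noncomputable def linCoeff : ℕ → F × F
  | 0 => (0, 0)
  | 1 => (ζ, 1)
  | K + 2 =>
    let f : F⟦X⟧ := mk fun i => if _ : i < K + 2 then (linCoeff i).1 else 0
    let g : F⟦X⟧ := mk fun i => if _ : i < K + 2 then (linCoeff i).2 else 0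
    let M := coeff (K + 2) (PS.comp g f)
    if ζ ^ (K + 2) = ζ then (-M, 0) else (t (K + 2), (t (K + 2) + M) / (ζ - ζ ^ (K + 2)))

noncomputable def linMap : F⟦X⟧ := mk fun k => (linCoeff ζ t k).1

noncomputable def linearizer : F⟦X⟧ := mk fun k => (linCoeff ζ t k).2

open Classical in
theorem linCoeff_add_two (K : ℕ) :
    linCoeff ζ t (K + 2) =
      let M := coeff (K + 2)
        (PS.comp (trunc (K + 2) (linearizer ζ t)) (trunc (K + 2) (linMap ζ t)))
      if ζ ^ (K + 2) = ζ then (-M, 0) else (t (K + 2), (t (K + 2) + M) / (ζ - ζ ^ (K + 2))) := by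
  have hf : (mk fun i => if _ : i < K + 2 then (linCoeff ζ t i).1 else 0) =
      (trunc (K + 2) (linMap ζ t) : F⟦X⟧) := by
    ext i; simp [Polynomial.coeff_coe, coeff_trunc, linMap]
  have hg : (mk fun i => if _ : i < K + 2 then (linCoeff ζ t i).2 else 0) =
      (trunc (K + 2) (linearizer ζ t) : F⟦X⟧) := by
    ext i; simp [Polynomial.coeff_coe, coeff_trunc, linearizer]
  rw [linCoeff, hf, hg]

theorem constantCoeff_linMap : constantCoeff (linMap ζ t) = 0 := by
  simp [← coeff_zero_eq_constantCoeff_apply, linMap, linCoeff]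

theorem constantCoeff_linearizer : constantCoeff (linearizer ζ t) = 0 := by
  simp [← coeff_zero_eq_constantCoeff_apply, linearizer, linCoeff]

@[simp]
theorem coeff_one_linMap : coeff 1 (linMap ζ t) = ζ := by
  simp [linMap, linCoeff]

@[simp]
theorem coeff_one_linearizer : coeff 1 (linearizer ζ t) = 1 := by
  simp [linearizer, linCoeff]

theorem coeff_linMap_of_pow_ne {K : ℕ} (hK : 2 ≤ K) (hζK : ζ ^ K ≠ ζ) :
    coeff K (linMap ζ t) = t K := by
  obtain ⟨K, rfl⟩ := Nat.exists_eq_add_of_le' hK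
  simp [linMap, linCoeff_add_two, hζK]

theorem coeff_linMap_add_coeff_comp_trunc (K : ℕ) :
    coeff (K + 2) (linMap ζ t)
      + coeff (K + 2) (PS.comp (trunc (K + 2) (linearizer ζ t)) (trunc (K + 2) (linMap ζ t)))
      = (ζ - ζ ^ (K + 2)) * coeff (K + 2) (linearizer ζ t) := by
  simp only [linMap, linearizer, coeff_mk, linCoeff_add_two]
  split_ifs with hζK
  · simp [hζK]
  · field_simp [sub_ne_zero.mpr (Ne.symm hζK)]

theorem comp_linearizer_linMap : PS.comp (linearizer ζ t) (linMap ζ t) = ζ • linearizer ζ t := by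
  ext K
  obtain (_ | _ | K) := K
  · simp [linearizer, linCoeff]
  · rw [coeff_comp, sum_range_succ, sum_range_one]
    simp [linearizer, linCoeff]
  · rw [coeff_comp_eq_add_coeff_comp_trunc (constantCoeff_linMap ζ t)
      (constantCoeff_linearizer ζ t) (by omega), coeff_smul, smul_eq_mul, coeff_one_linMap,
      coeff_one_linearizer]
    linear_combination coeff_linMap_add_coeff_comp_trunc ζ t K

end Linearization

end PS

open Filter Topology

theorem not_tendsto_sum_range_of_unbounded {E : Type*} [SeminormedAddCommGroup E] {u : ℕ → E}
    (hu : ∀ C, ∃ k, C < ‖u k‖) (l : E) :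
    ¬ Tendsto (fun N => ∑ k ∈ range N, u k) atTop (𝓝 l) := fun hl => by
  obtain ⟨C, hC⟩ := exists_norm_le_of_cauchySeq hl.cauchySeq
  obtain ⟨k, hk⟩ := hu C
  exact (hC k).not_gt hk

theorem exists_lt_norm_mul_pow_of_frequently_eq_pow_self {𝕜 : Type*} [RCLike 𝕜] {a : ℕ → 𝕜}
    (ha : ∃ᶠ k in atTop, a k = (k : 𝕜) ^ k) {z : 𝕜} (hz : z ≠ 0) (C : ℝ) :
    ∃ k, C < ‖a k * z ^ k‖ := by
  have hz' : 0 < ‖z‖ := norm_pos_iff.mpr hz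
  obtain ⟨N, hN⟩ := exists_nat_gt (max C 1 / ‖z‖)
  obtain ⟨k, hkN, hk⟩ := frequently_atTop.mp ha N
  have hkz : max C 1 < k * ‖z‖ :=
    (div_lt_iff₀ hz').mp (hN.trans_le (by exact_mod_cast hkN))
  have hk0 : k ≠ 0 := by
    rintro rfl
    simp only [CharP.cast_eq_zero, zero_mul] at hkz
    linarith [le_max_right C 1]
  refine ⟨k, ?_⟩
  calc C ≤ max C 1 := le_max_left C 1
    _ < k * ‖z‖ := hkz
    _ ≤ (k * ‖z‖) ^ k := le_self_pow₀ (by linarith [le_max_right C 1]) hk0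
    _ = ‖a k * z ^ k‖ := by rw [hk, norm_mul, norm_pow, norm_pow, RCLike.norm_natCast, mul_pow]

theorem stmt_14 (n : ℕ) (hn : 2 ≤ n) :
    ∃ S : Set (PowerSeries ℂ), ¬ S.Countable ∧
      ∀ f ∈ S, PS.HasOrder f n ∧
        ∀ z : ℂ, z ≠ 0 →
          ¬ ∃ l : ℂ, Filter.Tendsto
              (fun N => ∑ k ∈ Finset.range N, PowerSeries.coeff k f * z ^ k)
              Filter.atTop (nhds l) := by
  have hζ := Complex.isPrimitiveRoot_exp n (by omega)
  set ζ := Complex.exp (2 * Real.pi * Complex.I / n)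
  have hζ_mul (m : ℕ) : ζ ^ (n * m) ≠ ζ := by
    rw [pow_mul, hζ.pow_eq_one, one_pow]
    exact (hζ.ne_one (by omega)).symm
  let F (c : ℂ) : ℂ⟦X⟧ := PS.linMap ζ (Function.update (fun k => (k : ℂ) ^ k) n c)
  have hF_n (c : ℂ) : coeff n (F c) = c := by
    rw [PS.coeff_linMap_of_pow_ne ζ _ hn (by simpa using hζ_mul 1), Function.update_self]
  have hF_pow_self (c : ℂ) : ∃ᶠ k in atTop, coeff k (F c) = (k : ℂ) ^ k :=
    frequently_atTop.mpr fun N => ⟨n * (N + 2), by nlinarith, by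
      rw [PS.coeff_linMap_of_pow_ne ζ _ (by nlinarith) (hζ_mul _),
        Function.update_of_ne (by nlinarith)]⟩
  refine ⟨Set.range F, fun hS => ?_, ?_⟩
  · have hinj : Function.Injective F := fun a b hab => by
      simpa [hF_n] using congrArg (coeff n) hab
    exact not_countable_complex (by simpa using hS.preimage hinj)
  · rintro _ ⟨c, rfl⟩
    refine ⟨PS.hasOrder_of_comp_eq_smul hζ (PS.constantCoeff_linMap ζ _)
      (PS.constantCoeff_linearizer ζ _) (by simp) (PS.comp_linearizer_linMap ζ _), ?_⟩
    rintro z hz ⟨l, hl⟩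
    exact not_tendsto_sum_range_of_unbounded
      (exists_lt_norm_mul_pow_of_frequently_eq_pow_self (hF_pow_self c) hz) l hl
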